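/- Fix p ∈ [1, ∞). There exists a constant C > 0, independent of f, such that for every continuously differentiable function f : ℝ → ℝ that is 2π-periodic and has mean zero over one period (∫_{−π}^{π} f(x) dx = 0), one has ‖f‖_{L^∞(Ω)} ≤ C ‖f‖_{L^p(Ω)}^{p/(p+2)} ‖f'‖_{L²(Ω)}^{2/(p+2)}, where Ω = [−π, π]. -/

import Mathlib

open MeasureTheory Real Set

/-- The `L²` norm of `f` over one period `Ω = [-π, π]`. -/
noncomputable def L2Norm (f : ℝ → ℝ) : ℝ := (∫ x in (-π)..π, (f x) ^ 2) ^ ((1 : ℝ) / 2)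

/-- The `Lᵖ` norm of `f` over one period `Ω = [-π, π]`, for a real exponent `p`. -/
noncomputable def LpNorm (p : ℝ) (f : ℝ → ℝ) : ℝ := (∫ x in (-π)..π, |f x| ^ p) ^ (1 / p)

/-- The supremum of `|f|` over one period `Ω = [-π, π]`. -/
noncomputable def supNorm (f : ℝ → ℝ) : ℝ := sSup ((fun x => |f x|) '' Icc (-π) π)

open Filter Topology in
lemma abs_real_sign_le_one (y : ℝ) : |Real.sign y| ≤ 1 := by
  rcases lt_trichotomy y 0 with hy | rfl | hy
  · rw [Real.sign_of_neg hy]; norm_num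
  · rw [Real.sign_zero]; norm_num
  · rw [Real.sign_of_pos hy]; norm_num

open Filter Topology in
lemma continuous_abs_rpow_sign {r : ℝ} (hr : 0 < r) :
    Continuous (fun y : ℝ => |y| ^ r * Real.sign y) := by
  rw [continuous_iff_continuousAt]
  intro y
  rcases lt_trichotomy y 0 with hy | rfl | hy
  · have h1 : ContinuousAt (fun z : ℝ => |z| ^ r * (-1)) y :=
      ((continuous_abs.rpow_const fun _ => Or.inr hr.le).mul continuous_const).continuousAt
    apply h1.congr
    filter_upwards [Iio_mem_nhds hy] with z hz
    rw [Real.sign_of_neg hz]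
  · have hb : Tendsto (fun z : ℝ => |z| ^ r) (nhds 0) (nhds 0) := by
      have h := (continuous_abs.rpow_const fun _ => Or.inr hr.le).tendsto 0
      convert h using 2
      simp [Real.zero_rpow hr.ne']
    have : Tendsto (fun z : ℝ => |z| ^ r * Real.sign z) (nhds 0) (nhds 0) := by
      apply squeeze_zero_norm _ hb
      intro z
      rw [Real.norm_eq_abs, abs_mul, abs_of_nonneg (rpow_nonneg (abs_nonneg z) r)]
      calc |z| ^ r * |Real.sign z| ≤ |z| ^ r * 1 := by
            exact mul_le_mul_of_nonneg_left (abs_real_sign_le_one z)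
              (rpow_nonneg (abs_nonneg z) r)
        _ = |z| ^ r := mul_one _
    unfold ContinuousAt
    simpa [Real.sign_zero] using this
  · have h1 : ContinuousAt (fun z : ℝ => |z| ^ r * 1) y :=
      ((continuous_abs.rpow_const fun _ => Or.inr hr.le).mul continuous_const).continuousAt
    apply h1.congr
    filter_upwards [Ioi_mem_nhds hy] with z hz
    rw [Real.sign_of_pos hz]

open Filter Topology in
lemma myHasDerivAt_abs_rpow {s : ℝ} (hs : 1 < s) (y : ℝ) :
    HasDerivAt (fun z : ℝ => |z| ^ s) (s * (|y| ^ (s - 1) * Real.sign y)) y := by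
  rcases lt_trichotomy y 0 with hy | rfl | hy
  · have h1 : HasDerivAt (fun z : ℝ => -z) (-1) y := (hasDerivAt_neg y)
    have h2 : HasDerivAt (fun z : ℝ => (-z) ^ s) (s * (-y) ^ (s - 1) * (-1)) y := by
      have := (Real.hasDerivAt_rpow_const (x := -y) (p := s)
        (Or.inl (by simpa using hy.ne))).comp y h1
      simpa [Function.comp_def] using this
    have h3 : (fun z : ℝ => |z| ^ s) =ᶠ[nhds y] (fun z : ℝ => (-z) ^ s) := by
      filter_upwards [Iio_mem_nhds hy] with z hz
      rw [abs_of_neg hz]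
    have h4 := h2.congr_of_eventuallyEq h3
    have : s * (-y) ^ (s - 1) * (-1) = s * (|y| ^ (s - 1) * Real.sign y) := by
      rw [abs_of_neg hy, Real.sign_of_neg hy]; ring
    rwa [this] at h4
  · have : HasDerivAt (fun z : ℝ => |z| ^ s) 0 0 := by
      rw [hasDerivAt_iff_tendsto_slope]
      have hb : Tendsto (fun z : ℝ => |z| ^ (s - 1)) (nhds 0) (nhds 0) := by
        have h := (continuous_abs.rpow_const fun _ => Or.inr (by linarith : (0:ℝ) ≤ s - 1)).tendsto 0
        convert h using 2
        simp [Real.zero_rpow (by linarith : s - 1 ≠ 0)]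
      apply squeeze_zero_norm' _ (hb.mono_left nhdsWithin_le_nhds)
      filter_upwards [self_mem_nhdsWithin] with z (hz : z ≠ 0)
      rw [slope_def_field]
      rw [Real.norm_eq_abs, abs_zero, Real.zero_rpow (by linarith : s ≠ 0)]
      rw [sub_zero, sub_zero, abs_div, abs_of_nonneg (rpow_nonneg (abs_nonneg z) s)]
      rw [Real.rpow_sub (abs_pos.mpr hz), Real.rpow_one]
    simpa [Real.sign_zero] using this
  · have h2 : HasDerivAt (fun z : ℝ => z ^ s) (s * y ^ (s - 1)) y :=
      Real.hasDerivAt_rpow_const (Or.inl hy.ne')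
    have h3 : (fun z : ℝ => |z| ^ s) =ᶠ[nhds y] (fun z : ℝ => z ^ s) := by
      filter_upwards [Ioi_mem_nhds hy] with z hz
      rw [abs_of_pos hz]
    have h4 := h2.congr_of_eventuallyEq h3
    have : s * y ^ (s - 1) = s * (|y| ^ (s - 1) * Real.sign y) := by
      rw [abs_of_pos hy, Real.sign_of_pos hy]; ring
    rwa [this] at h4

theorem interp_Linfty_mean_zero (p : ℝ) (hp : 1 ≤ p) :
    ∃ C : ℝ, 0 < C ∧ ∀ f : ℝ → ℝ, ContDiff ℝ 1 f → Function.Periodic f (2 * π) →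
      (∫ x in (-π)..π, f x) = 0 →
      supNorm f ≤ C * (LpNorm p f) ^ (p / (p + 2))
        * (L2Norm (deriv f)) ^ (2 / (p + 2)) := by
  have hp0 : 0 < p := lt_of_lt_of_le one_pos hp
  set s : ℝ := p / 2 + 1 with hs_def
  have hs1 : 1 < s := by rw [hs_def]; linarith
  have hs0 : 0 < s := by linarith
  have hs2 : 2 * s = p + 2 := by rw [hs_def]; ring
  refine ⟨s, hs0, ?_⟩
  intro f hf _hper hmean
  have hππ : -π < π := by linarith [Real.pi_pos]
  have hfc : Continuous f := hf.continuous
  have hf'c : Continuous (deriv f) := hf.continuous_deriv le_rfl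
  have hfd : ∀ x, HasDerivAt f (deriv f x) x := fun x =>
    (hf.differentiable one_ne_zero x).hasDerivAt
  -- a zero of f
  obtain ⟨c, hc, hc0⟩ : ∃ c ∈ Ioo (-π) π, f c = 0 := by
    have hFd : ∀ x : ℝ, HasDerivAt (fun u => ∫ t in (-π)..u, f t) (f x) x := fun x =>
      intervalIntegral.integral_hasDerivAt_right (hfc.intervalIntegrable _ _)
        (hfc.stronglyMeasurableAtFilter _ _) hfc.continuousAt
    have hFc : Continuous (fun u => ∫ t in (-π)..u, f t) :=
      continuous_iff_continuousAt.mpr fun x => (hFd x).continuousAt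
    obtain ⟨c, hc, h0⟩ := exists_hasDerivAt_eq_zero hππ hFc.continuousOn
      (by simp [hmean]) (fun x _ => hFd x)
    exact ⟨c, hc, h0⟩
  -- max point
  have hne : (Icc (-π) π).Nonempty := nonempty_Icc.mpr hππ.le
  obtain ⟨x₀, hx₀, hmax⟩ := isCompact_Icc.exists_isMaxOn hne
    (continuous_abs.comp hfc).continuousOn
  have hsup : supNorm f = |f x₀| := by
    apply IsGreatest.csSup_eq
    constructor
    · exact mem_image_of_mem _ hx₀
    · rintro y ⟨z, hz, rfl⟩; exact hmax hz
  -- derivative of |f|^s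
  set D : ℝ → ℝ := fun x => s * (|f x| ^ (s - 1) * Real.sign (f x)) * deriv f x with hD_def
  set B : ℝ → ℝ := fun x => s * (|f x| ^ (s - 1) * |deriv f x|) with hB_def
  have hsm1 : (0:ℝ) < s - 1 := by linarith
  have hφ : ∀ x, HasDerivAt (fun y => |f y| ^ s) (D x) x := by
    intro x
    have := (myHasDerivAt_abs_rpow hs1 (f x)).comp x (hfd x)
    simpa [Function.comp_def, hD_def] using this
  have hDc : Continuous D :=
    (continuous_const.mul ((continuous_abs_rpow_sign hsm1).comp hfc)).mul hf'c
  have hBc : Continuous B :=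
    continuous_const.mul (((continuous_abs.rpow_const fun _ => Or.inr hsm1.le).comp
      hfc).mul (continuous_abs.comp hf'c))
  have hB0 : ∀ x, 0 ≤ B x := by
    intro x
    exact mul_nonneg hs0.le (mul_nonneg (rpow_nonneg (abs_nonneg _) _) (abs_nonneg _))
  have hDB : ∀ x, |D x| ≤ B x := by
    intro x
    rw [hD_def, hB_def]
    simp only []
    rw [abs_mul, abs_mul, abs_mul, abs_of_nonneg hs0.le,
      abs_of_nonneg (rpow_nonneg (abs_nonneg (f x)) _)]
    have h1 : |Real.sign (f x)| ≤ 1 := abs_real_sign_le_one (f x)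
    have h2 : (0:ℝ) ≤ |f x| ^ (s - 1) := rpow_nonneg (abs_nonneg _) _
    calc s * (|f x| ^ (s - 1) * |Real.sign (f x)|) * |deriv f x|
        = s * (|f x| ^ (s - 1) * |deriv f x|) * |Real.sign (f x)| := by ring
      _ ≤ s * (|f x| ^ (s - 1) * |deriv f x|) * 1 :=
          mul_le_mul_of_nonneg_left h1
            (mul_nonneg hs0.le (mul_nonneg h2 (abs_nonneg _)))
      _ = s * (|f x| ^ (s - 1) * |deriv f x|) := mul_one _
  -- key FTC inequality
  have key : |f x₀| ^ s ≤ ∫ x in (-π)..π, B x := by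
    have hsub : ∫ x in c..x₀, D x = |f x₀| ^ s - |f c| ^ s :=
      intervalIntegral.integral_eq_sub_of_hasDerivAt (fun x _ => hφ x)
        (hDc.intervalIntegrable _ _)
    have h0 : |f c| ^ s = 0 := by
      rw [hc0, abs_zero, Real.zero_rpow (by linarith : s ≠ 0)]
    have hminmax : -π ≤ min c x₀ ∧ max c x₀ ≤ π :=
      ⟨le_min hc.1.le hx₀.1, max_le hc.2.le hx₀.2⟩
    calc |f x₀| ^ s = ∫ x in c..x₀, D x := by rw [hsub, h0, sub_zero]
      _ ≤ |∫ x in c..x₀, D x| := le_abs_self _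
      _ = |∫ x in min c x₀..max c x₀, D x| := by
          rcases le_total c x₀ with h | h
          · rw [min_eq_left h, max_eq_right h]
          · rw [min_eq_right h, max_eq_left h, intervalIntegral.integral_symm, abs_neg]
      _ ≤ ∫ x in min c x₀..max c x₀, |D x| :=
          intervalIntegral.abs_integral_le_integral_abs min_le_max
      _ ≤ ∫ x in min c x₀..max c x₀, B x :=
          intervalIntegral.integral_mono_on min_le_max
            ((hDc.abs).intervalIntegrable _ _) (hBc.intervalIntegrable _ _)
            (fun x _ => hDB x)
      _ ≤ ∫ x in (-π)..π, B x :=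
          intervalIntegral.integral_mono_interval hminmax.1 min_le_max hminmax.2
            (Filter.Eventually.of_forall hB0) (hBc.intervalIntegrable _ _)
  -- Hölder
  set A : ℝ := ∫ x in (-π)..π, |f x| ^ p with hA_def
  set E : ℝ := ∫ x in (-π)..π, (deriv f x) ^ 2 with hE_def
  have hA0 : 0 ≤ A :=
    intervalIntegral.integral_nonneg hππ.le fun x _ => rpow_nonneg (abs_nonneg _) _
  have hE0 : 0 ≤ E := intervalIntegral.integral_nonneg hππ.le fun x _ => sq_nonneg _
  have holder : (∫ x in (-π)..π, B x) ≤ s * (A ^ ((1:ℝ)/2) * E ^ ((1:ℝ)/2)) := by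
    set μ : Measure ℝ := volume.restrict (Ioc (-π) π) with hμ_def
    haveI hμfin : IsFiniteMeasure μ := by
      constructor
      rw [hμ_def, Measure.restrict_apply_univ]
      exact measure_Ioc_lt_top
    have hmem : ∀ g : ℝ → ℝ, Continuous g → MemLp g (ENNReal.ofReal 2) μ := by
      intro g hg
      obtain ⟨z, _, hzmax⟩ := isCompact_Icc.exists_isMaxOn hne
        (continuous_abs.comp hg).continuousOn
      apply MemLp.of_bound hg.aestronglyMeasurable (|g z|)
      rw [hμ_def]
      filter_upwards [ae_restrict_mem measurableSet_Ioc] with x hx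
      exact hzmax (Ioc_subset_Icc_self hx)
    have hconj : (2:ℝ).HolderConjugate 2 := Real.HolderConjugate.two_two
    have hF1 : Continuous (fun x => |f x| ^ (s - 1)) :=
      (continuous_abs.rpow_const fun _ => Or.inr hsm1.le).comp hfc
    have hF2 : Continuous (fun x => |deriv f x|) := continuous_abs.comp hf'c
    have h := integral_mul_le_Lp_mul_Lq_of_nonneg hconj
      (f := fun x => |f x| ^ (s - 1)) (g := fun x => |deriv f x|) (μ := μ)
      (Filter.Eventually.of_forall fun x => rpow_nonneg (abs_nonneg _) _)
      (Filter.Eventually.of_forall fun x => abs_nonneg _)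
      (hmem _ hF1) (hmem _ hF2)
    have e1 : ∫ a, (|f a| ^ (s - 1)) ^ (2:ℝ) ∂μ = A := by
      rw [hA_def, intervalIntegral.integral_of_le hππ.le, hμ_def]
      apply setIntegral_congr_fun measurableSet_Ioc
      intro x _
      show (|f x| ^ (s - 1)) ^ (2:ℝ) = |f x| ^ p
      rw [← Real.rpow_mul (abs_nonneg _)]
      congr 1
      rw [hs_def]; ring
    have e2 : ∫ a, (|deriv f a|) ^ (2:ℝ) ∂μ = E := by
      rw [hE_def, intervalIntegral.integral_of_le hππ.le, hμ_def]
      apply setIntegral_congr_fun measurableSet_Ioc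
      intro x _
      show |deriv f x| ^ (2:ℝ) = (deriv f x) ^ 2
      rw [show (2:ℝ) = ((2:ℕ):ℝ) by norm_num, Real.rpow_natCast]
      exact sq_abs _
    have e3 : (∫ x in (-π)..π, B x) = s * ∫ a, |f a| ^ (s - 1) * |deriv f a| ∂μ := by
      rw [hB_def]
      rw [intervalIntegral.integral_const_mul, intervalIntegral.integral_of_le hππ.le, hμ_def]
    rw [e3]
    rw [e1, e2] at h
    exact mul_le_mul_of_nonneg_left h hs0.le
  -- combine
  have hMpow : |f x₀| ^ s ≤ s * (A ^ ((1:ℝ)/2) * E ^ ((1:ℝ)/2)) := key.trans holder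
  have hRHS0 : 0 ≤ s * (A ^ ((1:ℝ)/2) * E ^ ((1:ℝ)/2)) := by positivity
  have hM : |f x₀| ≤ (s * (A ^ ((1:ℝ)/2) * E ^ ((1:ℝ)/2))) ^ (s⁻¹) := by
    have h1 : (|f x₀| ^ s) ^ (s⁻¹) ≤ (s * (A ^ ((1:ℝ)/2) * E ^ ((1:ℝ)/2))) ^ (s⁻¹) :=
      Real.rpow_le_rpow (rpow_nonneg (abs_nonneg _) _) hMpow (by positivity)
    rwa [← Real.rpow_mul (abs_nonneg _), mul_inv_cancel₀ (by linarith : s ≠ 0),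
      Real.rpow_one] at h1
  have expand : (s * (A ^ ((1:ℝ)/2) * E ^ ((1:ℝ)/2))) ^ (s⁻¹)
      = s ^ (s⁻¹) * (A ^ ((1:ℝ)/(p+2)) * E ^ ((1:ℝ)/(p+2))) := by
    rw [Real.mul_rpow hs0.le (by positivity),
      Real.mul_rpow (by positivity) (by positivity),
      ← Real.rpow_mul hA0, ← Real.rpow_mul hE0]
    have : (1:ℝ)/2 * s⁻¹ = 1/(p+2) := by
      rw [← hs2]; field_simp
    rw [this]
  have hfinal : |f x₀| ≤ s * (A ^ ((1:ℝ)/(p+2)) * E ^ ((1:ℝ)/(p+2))) := by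
    refine hM.trans ?_
    rw [expand]
    have hss : s ^ (s⁻¹) ≤ s := by
      have := Real.rpow_le_rpow_of_exponent_le hs1.le
        (by rw [inv_le_one_iff₀]; right; linarith : s⁻¹ ≤ 1)
      rwa [Real.rpow_one] at this
    apply mul_le_mul_of_nonneg_right hss (by positivity)
  -- rewrite RHS of goal
  rw [hsup]
  have eL : (LpNorm p f) ^ (p / (p + 2)) = A ^ ((1:ℝ)/(p+2)) := by
    rw [LpNorm, ← hA_def, ← Real.rpow_mul hA0]
    congr 1
    field_simp
  have eL2 : (L2Norm (deriv f)) ^ (2 / (p + 2)) = E ^ ((1:ℝ)/(p+2)) := by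
    rw [L2Norm, ← hE_def, ← Real.rpow_mul hE0]
    congr 1
    field_simp
  rw [eL, eL2, mul_assoc]
  exact hfinal
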